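/- arXiv:2107.05572 — 5 statements merged into one kernel-verified Lean document; each statement's English description precedes it below -/
import Mathlib

section
/- Let a_n = (2n)!! = 2^n · n! be the double factorial of even numbers, viewed as a real number. Then for every n ≥ 0, the polynomial p_n(x) = a_0 + a_1 x + ... + a_n x^n has exactly n mod 2 real roots counted with multiplicity. -/
open Polynomial Finset Filter

noncomputable def aa (i : ℕ) : ℝ := 2 ^ i * Nat.factorial i

lemma aa_pos (i : ℕ) : 0 < aa i := by
  unfold aa; positivity

lemma aa_succ (i : ℕ) : aa (i + 1) = 2 * ((i : ℝ) + 1) * aa i := by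
  unfold aa
  rw [Nat.factorial_succ]
  push_cast
  ring

noncomputable def Pn (n : ℕ) : ℝ[X] :=
  ∑ i ∈ Finset.range (n + 1), C (aa i) * X ^ i

lemma Pn_succ (n : ℕ) : Pn (n + 1) = Pn n + C (aa (n + 1)) * X ^ (n + 1) :=
  Finset.sum_range_succ _ _

lemma Pn_eval (n : ℕ) (x : ℝ) : (Pn n).eval x = ∑ i ∈ Finset.range (n + 1), aa i * x ^ i := by
  rw [Pn, eval_finset_sum]; simp

lemma Pn_coeff (n k : ℕ) : (Pn n).coeff k = if k ≤ n then aa k else 0 := by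
  rw [Pn, finset_sum_coeff]
  simp only [coeff_C_mul_X_pow]
  rw [Finset.sum_ite_eq (Finset.range (n+1)) k (fun i => aa i)]
  simp [Nat.lt_succ_iff]

lemma Pn_natDegree (n : ℕ) : (Pn n).natDegree = n := by
  apply natDegree_eq_of_le_of_coeff_ne_zero
  · apply natDegree_sum_le_of_forall_le
    intro i hi
    exact (natDegree_C_mul_X_pow_le _ _).trans (Nat.lt_succ_iff.mp (Finset.mem_range.mp hi))
  · rw [Pn_coeff]
    simp [(aa_pos n).ne']

lemma Pn_ne_zero (n : ℕ) : Pn n ≠ 0 := by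
  intro h
  have := Pn_coeff n 0
  rw [h] at this
  simp at this
  exact (aa_pos 0).ne' this.symm

lemma Pn_leadingCoeff (n : ℕ) : (Pn n).leadingCoeff = aa n := by
  rw [leadingCoeff, Pn_natDegree, Pn_coeff]
  simp

lemma DPn_natDegree (n : ℕ) : (derivative (Pn n)).natDegree = n - 1 := by
  rcases n with _ | m
  · simp [Pn]
  apply natDegree_eq_of_le_of_coeff_ne_zero
  · exact (natDegree_derivative_le _).trans (by rw [Pn_natDegree])
  · rw [show m + 1 - 1 = m from rfl, coeff_derivative, Pn_coeff]
    simp only [if_pos (le_refl (m+1))]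
    exact (mul_pos (aa_pos _) (by positivity)).ne'

lemma DPn_leadingCoeff (n : ℕ) : (derivative (Pn (n+1))).leadingCoeff = aa (n+1) * ((n:ℝ)+1) := by
  rw [leadingCoeff, DPn_natDegree, show n + 1 - 1 = n from rfl, coeff_derivative, Pn_coeff]
  simp only [if_pos (le_refl (n+1))]

lemma aa_zero : aa 0 = 1 := by unfold aa; simp

lemma aa_one : aa 1 = 2 := by unfold aa; simp

lemma I1 (n : ℕ) : C 2 * X ^ 2 * derivative (Pn n) =
    (1 - C 2 * X) * Pn n - 1 + C (aa (n + 1)) * X ^ (n + 1) := by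
  induction n with
  | zero =>
    simp [Pn, aa_zero, aa_one]
  | succ n ih =>
    rw [Pn_succ, derivative_add, derivative_C_mul, derivative_X_pow, Nat.add_sub_cancel,
      aa_succ (n + 1), C_mul, C_mul, map_add, C_1]
    linear_combination ih

lemma comp_negX_eval (p : ℝ[X]) (x : ℝ) : eval x (p.comp (-X)) = eval (-x) p := by
  simp [eval_comp]

lemma comp_negX_natDegree (p : ℝ[X]) : (p.comp (-X)).natDegree = p.natDegree := by
  rw [natDegree_comp, natDegree_neg, natDegree_X, mul_one]

lemma comp_negX_leadingCoeff (p : ℝ[X]) :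
    (p.comp (-X)).leadingCoeff = p.leadingCoeff * (-1) ^ p.natDegree := by
  rw [leadingCoeff_comp (by rw [natDegree_neg, natDegree_X]; exact one_ne_zero)]
  rw [leadingCoeff_neg, leadingCoeff_X]

lemma exists_min (p : ℝ[X]) (he : Even p.natDegree) (h0 : 0 < p.natDegree)
    (hl : 0 < p.leadingCoeff) : ∃ r, ∀ x, p.eval r ≤ p.eval x := by
  have hdeg : 0 < p.degree := natDegree_pos_iff_degree_pos.mp h0
  have htop : Tendsto (fun x => eval x p) atTop atTop :=
    p.tendsto_atTop_of_leadingCoeff_nonneg hdeg hl.le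
  have hbot : Tendsto (fun x => eval x p) atBot atTop := by
    have hq0 : 0 < (p.comp (-X)).degree := by
      rw [← natDegree_pos_iff_degree_pos, comp_negX_natDegree]
      rwa [← natDegree_pos_iff_degree_pos] at hdeg
    have hql : 0 ≤ (p.comp (-X)).leadingCoeff := by
      rw [comp_negX_leadingCoeff, he.neg_one_pow, mul_one]
      exact hl.le
    have h1 : Tendsto (fun x => eval x (p.comp (-X))) atTop atTop :=
      (p.comp (-X)).tendsto_atTop_of_leadingCoeff_nonneg hq0 hql
    have h2 : Tendsto (fun x : ℝ => eval (-x) p) atTop atTop := by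
      simpa only [comp_negX_eval] using h1
    have := h2.comp tendsto_neg_atBot_atTop
    simpa only [Function.comp_def, neg_neg] using this
  exact p.continuous.exists_forall_le
    (by rw [cocompact_eq_atBot_atTop]; exact tendsto_sup.mpr ⟨hbot, htop⟩)

lemma Pn_even_pos (m : ℕ) (x : ℝ) : 0 < (Pn (2 * m)).eval x := by
  rcases Nat.eq_zero_or_pos m with hm | hm
  · subst hm
    simp [Pn_eval, aa_zero]
  obtain ⟨r, hr⟩ := exists_min (Pn (2 * m))
    (by rw [Pn_natDegree]; exact ⟨m, (two_mul m).symm ▸ (two_mul m)⟩)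
    (by rw [Pn_natDegree]; omega)
    (by rw [Pn_leadingCoeff]; exact aa_pos _)
  refine lt_of_lt_of_le ?_ (hr x)
  rcases le_or_gt 0 r with hrpos | hrneg
  · rw [Pn_eval]
    apply Finset.sum_pos'
    · intro i _
      exact mul_nonneg (aa_pos i).le (pow_nonneg hrpos i)
    · exact ⟨0, Finset.mem_range.mpr (by omega), by simp [aa_zero]⟩
  · have hloc : IsLocalMin (fun x => eval x (Pn (2 * m))) r := Filter.Eventually.of_forall hr
    have hd0 : eval r (derivative (Pn (2 * m))) = 0 := by
      rw [← Polynomial.deriv]; exact hloc.deriv_eq_zero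
    have hI := congrArg (eval r) (I1 (2 * m))
    simp only [eval_mul, eval_add, eval_sub, eval_one, eval_pow, eval_C, eval_X, hd0,
      mul_zero] at hI
    have hodd : Odd (2 * m + 1) := ⟨m, by ring⟩
    have hpow : r ^ (2 * m + 1) < 0 := hodd.pow_neg hrneg
    nlinarith [aa_pos (2 * m + 1), mul_pos (aa_pos (2 * m + 1)) (neg_pos.mpr hpow)]

lemma DPn_eval (n : ℕ) (x : ℝ) :
    eval x (derivative (Pn n)) = ∑ i ∈ Finset.range (n + 1), aa i * ((i : ℝ) * x ^ (i - 1)) := by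
  rw [Pn, derivative_sum]
  rw [eval_finset_sum]
  apply Finset.sum_congr rfl
  intro i _
  rw [derivative_C_mul, derivative_X_pow]
  simp

lemma DPn_odd_pos (m : ℕ) (x : ℝ) : 0 < eval x (derivative (Pn (2 * m + 1))) := by
  rcases Nat.eq_zero_or_pos m with hm | hm
  · subst hm
    rw [DPn_eval]
    norm_num [Finset.sum_range_succ, aa_one]
  obtain ⟨r, hr⟩ := exists_min (derivative (Pn (2 * m + 1)))
    (by rw [DPn_natDegree]; exact ⟨m, by omega⟩)
    (by rw [DPn_natDegree]; omega)
    (by rw [show 2 * m + 1 = (2 * m) + 1 from rfl, DPn_leadingCoeff]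
        exact mul_pos (aa_pos _) (by positivity))
  refine lt_of_lt_of_le ?_ (hr x)
  rcases le_or_gt 0 r with hrpos | hrneg
  · rw [DPn_eval]
    apply Finset.sum_pos'
    · intro i _
      exact mul_nonneg (aa_pos i).le (mul_nonneg (Nat.cast_nonneg i) (pow_nonneg hrpos _))
    · refine ⟨1, Finset.mem_range.mpr (by omega), ?_⟩
      simp [aa_one]
  · set n := 2 * m + 1 with hn
    have hloc : IsLocalMin (fun x => eval x (derivative (Pn n))) r := Filter.Eventually.of_forall hr
    have hd0 : eval r (derivative (derivative (Pn n))) = 0 := by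
      rw [← Polynomial.deriv]; exact hloc.deriv_eq_zero
    have hI1 := congrArg (eval r) (I1 n)
    simp only [eval_mul, eval_add, eval_sub, eval_one, eval_pow, eval_C, eval_X] at hI1
    have hI2 := congrArg (fun q => eval r (derivative q)) (I1 n)
    simp only [derivative_mul, derivative_sub, derivative_add, derivative_one, derivative_C,
      derivative_X_pow, derivative_X, eval_mul, eval_add, eval_sub, eval_one, eval_pow,
      eval_C, eval_X, eval_neg, hd0, mul_zero, zero_mul, add_zero, zero_add, mul_one, zero_sub,
      sub_zero, Nat.cast_add, Nat.cast_one, Nat.add_sub_cancel] at hI2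
    set A := eval r (Pn n) with hA
    set B := eval r (derivative (Pn n)) with hB
    have key : B * (8 * r ^ 2 - 8 * r + 1) =
        2 - aa (n + 1) * r ^ n * ((n : ℝ) + 1 - 2 * (n : ℝ) * r) := by
      linear_combination (-2) * hI1 - (1 - 2 * r) * hI2
    have hodd : Odd n := ⟨m, by omega⟩
    have hpow : r ^ n < 0 := hodd.pow_neg hrneg
    have hfac : 0 < (n : ℝ) + 1 - 2 * (n : ℝ) * r := by
      have h1 : (0:ℝ) ≤ (n:ℝ) := Nat.cast_nonneg n
      nlinarith
    have hneg : aa (n + 1) * r ^ n * ((n : ℝ) + 1 - 2 * (n : ℝ) * r) < 0 :=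
      mul_neg_of_neg_of_pos (mul_neg_of_pos_of_neg (aa_pos _) hpow) hfac
    have hq : 0 < 8 * r ^ 2 - 8 * r + 1 := by nlinarith
    by_contra hBn
    push_neg at hBn
    nlinarith [mul_nonpos_of_nonpos_of_nonneg hBn hq.le]

lemma roots_even (m : ℕ) : (Pn (2 * m)).roots = 0 := by
  apply Multiset.eq_zero_of_forall_notMem
  intro a ha
  have := (mem_roots (Pn_ne_zero _)).mp ha
  exact absurd this (by simpa [IsRoot] using (Pn_even_pos m a).ne')

lemma roots_odd (m : ℕ) : Multiset.card (Pn (2 * m + 1)).roots = 1 := by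
  classical
  set n := 2 * m + 1 with hn
  have hmono : StrictMono (fun x => eval x (Pn n)) :=
    strictMono_of_deriv_pos (fun x => by
      rw [Polynomial.deriv]; exact DPn_odd_pos m x)
  have hd0 : 0 < (Pn n).degree := by
    rw [← natDegree_pos_iff_degree_pos, Pn_natDegree]; omega
  have htop : Tendsto (fun x => eval x (Pn n)) atTop atTop :=
    (Pn n).tendsto_atTop_of_leadingCoeff_nonneg hd0
      (by rw [Pn_leadingCoeff]; exact (aa_pos n).le)
  have hbot : Tendsto (fun x => eval x (Pn n)) atBot atBot := by
    have hq0 : 0 < ((Pn n).comp (-X)).degree := by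
      rw [← natDegree_pos_iff_degree_pos, comp_negX_natDegree, Pn_natDegree]; omega
    have hql : ((Pn n).comp (-X)).leadingCoeff ≤ 0 := by
      rw [comp_negX_leadingCoeff, Pn_natDegree, Pn_leadingCoeff]
      have : ((-1 : ℝ)) ^ n = -1 := Odd.neg_one_pow ⟨m, by omega⟩
      rw [this]
      nlinarith [aa_pos n]
    have h1 : Tendsto (fun x => eval x ((Pn n).comp (-X))) atTop atBot :=
      ((Pn n).comp (-X)).tendsto_atBot_of_leadingCoeff_nonpos hq0 hql
    have h2 : Tendsto (fun x : ℝ => eval (-x) (Pn n)) atTop atBot := by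
      simpa only [comp_negX_eval] using h1
    have := h2.comp tendsto_neg_atBot_atTop
    simpa only [Function.comp_def, neg_neg] using this
  obtain ⟨r, hr0⟩ := ((Pn n).continuous.surjective htop hbot) 0
  have hroots : (Pn n).roots = {r} := by
    refine Multiset.ext.mpr fun a => ?_
    rw [count_roots, Multiset.count_singleton]
    by_cases ha : a = r
    · subst ha
      rw [if_pos rfl]
      have h1 : 0 < rootMultiplicity a (Pn n) :=
        (rootMultiplicity_pos (Pn_ne_zero n)).mpr hr0
      have h2 : ¬ 1 < rootMultiplicity a (Pn n) := by
        rw [one_lt_rootMultiplicity_iff_isRoot (Pn_ne_zero n)]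
        rintro ⟨-, h⟩
        exact absurd h (by simpa [IsRoot] using (DPn_odd_pos m a).ne')
      omega
    · rw [if_neg ha]
      apply rootMultiplicity_eq_zero
      intro hroot
      exact ha (hmono.injective (show eval a (Pn n) = eval r (Pn n) from hroot.trans hr0.symm))
  rw [hroots]
  simp

theorem stmt_12 :
    ∀ n : ℕ, Multiset.card
      ((∑ i ∈ Finset.range (n + 1),
        C ((2 ^ i * Nat.factorial i : ℝ)) * X ^ i : Polynomial ℝ).roots) = n % 2 := by
  intro n
  have hPn : (∑ i ∈ Finset.range (n + 1),
      C ((2 ^ i * Nat.factorial i : ℝ)) * X ^ i : Polynomial ℝ) = Pn n := rfl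
  rw [hPn]
  rcases Nat.even_or_odd n with ⟨m, hm⟩ | ⟨m, hm⟩
  · have h : n = 2 * m := by omega
    subst h
    rw [roots_even]
    simp [Nat.mul_mod_right]
  · have h : n = 2 * m + 1 := by omega
    subst h
    rw [roots_odd]
    omega
end

section
/- Let a_n = (n + 1)², viewed as a real number. Then for every n ≥ 0, the polynomial p_n(x) = a_0 + a_1 x + ... + a_n x^n = 1 + 4x + 9x² + ... + (n+1)²x^n has exactly n mod 2 real roots counted with multiplicity. -/
open Polynomial

private lemma S_id (n : ℕ) (x : ℝ) :
    (1 - x) ^ 3 * ∑ i ∈ Finset.range (n + 1), ((i : ℝ) + 1) ^ 2 * x ^ i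
      = 1 + x - ((n : ℝ) + 2) ^ 2 * x ^ (n + 1)
        + (2 * (n : ℝ) ^ 2 + 6 * (n : ℝ) + 3) * x ^ (n + 2)
        - ((n : ℝ) + 1) ^ 2 * x ^ (n + 3) := by
  induction n with
  | zero => simp; ring
  | succ n ih =>
    rw [Finset.sum_range_succ, mul_add, ih]
    push_cast
    ring

private lemma T_id (m : ℕ) (x : ℝ) :
    (1 - x) ^ 4 * ∑ j ∈ Finset.range (m + 1), ((j : ℝ) + 2) ^ 2 * ((j : ℝ) + 1) * x ^ j
      = 4 + 2 * x - ((m : ℝ) ^ 3 + 8 * (m : ℝ) ^ 2 + 21 * (m : ℝ) + 18) * x ^ (m + 1)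
        + (3 * (m : ℝ) ^ 3 + 21 * (m : ℝ) ^ 2 + 44 * (m : ℝ) + 24) * x ^ (m + 2)
        - (3 * (m : ℝ) ^ 3 + 18 * (m : ℝ) ^ 2 + 31 * (m : ℝ) + 16) * x ^ (m + 3)
        + ((m : ℝ) + 1) * ((m : ℝ) + 2) ^ 2 * x ^ (m + 4) := by
  induction m with
  | zero => simp; ring
  | succ m ih =>
    rw [Finset.sum_range_succ, mul_add, ih]
    push_cast
    ring

private lemma S_pos {n : ℕ} (hn : Even n) (x : ℝ) :
    0 < ∑ i ∈ Finset.range (n + 1), ((i : ℝ) + 1) ^ 2 * x ^ i := by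
  rcases le_or_gt 0 x with hx | hx
  · refine Finset.sum_pos' (fun i _ => by positivity)
      ⟨0, Finset.mem_range.2 (Nat.succ_pos n), by norm_num⟩
  · have h3 : (0 : ℝ) < (1 - x) ^ 3 := by
      have : (0 : ℝ) < 1 - x := by linarith
      positivity
    have key : 0 < (1 - x) ^ 3 * ∑ i ∈ Finset.range (n + 1), ((i : ℝ) + 1) ^ 2 * x ^ i := by
      rw [S_id]
      obtain ⟨t, ht0, rfl⟩ : ∃ t : ℝ, 0 < t ∧ x = -t := ⟨-x, by linarith, by ring⟩
      obtain ⟨k, rfl⟩ := hn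
      have o1 : Odd (k + k + 1) := ⟨k, by ring⟩
      have e2 : Even (k + k + 2) := ⟨k + 1, by ring⟩
      have o3 : Odd (k + k + 3) := ⟨k + 1, by ring⟩
      rw [Odd.neg_pow o1, Even.neg_pow e2, Odd.neg_pow o3]
      have hk0 : (0 : ℝ) ≤ (k : ℝ) := Nat.cast_nonneg k
      have hkk : ((k + k : ℕ) : ℝ) = (k : ℝ) + (k : ℝ) := by push_cast; ring
      rw [hkk]
      have pa : 0 < ((k : ℝ) + (k : ℝ) + 2) ^ 2 * t ^ (k + k + 1) := by positivity
      have pb : 0 < (2 * ((k : ℝ) + (k : ℝ)) ^ 2 + 6 * ((k : ℝ) + (k : ℝ)) + 3)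
          * t ^ (k + k + 2) := by positivity
      have pc : 0 < ((k : ℝ) + (k : ℝ) + 1) ^ 2 * t ^ (k + k + 3) := by positivity
      rcases le_or_gt t 1 with h1 | h1
      · linarith
      · have hp : t ≤ t ^ (k + k + 1) := le_self_pow₀ h1.le (Nat.succ_ne_zero _)
        have h4 : (0 : ℝ) ≤ (((k : ℝ) + (k : ℝ) + 2) ^ 2 - 4) * t ^ (k + k + 1) := by
          have : (0 : ℝ) ≤ ((k : ℝ) + (k : ℝ) + 2) ^ 2 - 4 := by nlinarith
          positivity
        nlinarith [pow_pos ht0 (k + k + 1)]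
    by_contra h
    push_neg at h
    nlinarith [key, h3]

private lemma T_pos {m : ℕ} (hm : Even m) (x : ℝ) :
    0 < ∑ j ∈ Finset.range (m + 1), ((j : ℝ) + 2) ^ 2 * ((j : ℝ) + 1) * x ^ j := by
  rcases le_or_gt 0 x with hx | hx
  · refine Finset.sum_pos' (fun i _ => by positivity)
      ⟨0, Finset.mem_range.2 (Nat.succ_pos m), by norm_num⟩
  · have h3 : (0 : ℝ) < (1 - x) ^ 4 := by
      have : (0 : ℝ) < 1 - x := by linarith
      positivity
    have key : 0 < (1 - x) ^ 4
        * ∑ j ∈ Finset.range (m + 1), ((j : ℝ) + 2) ^ 2 * ((j : ℝ) + 1) * x ^ j := by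
      rw [T_id]
      obtain ⟨t, ht0, rfl⟩ : ∃ t : ℝ, 0 < t ∧ x = -t := ⟨-x, by linarith, by ring⟩
      obtain ⟨k, rfl⟩ := hm
      have o1 : Odd (k + k + 1) := ⟨k, by ring⟩
      have e2 : Even (k + k + 2) := ⟨k + 1, by ring⟩
      have o3 : Odd (k + k + 3) := ⟨k + 1, by ring⟩
      have e4 : Even (k + k + 4) := ⟨k + 2, by ring⟩
      rw [Odd.neg_pow o1, Even.neg_pow e2, Odd.neg_pow o3, Even.neg_pow e4]
      have hk0 : (0 : ℝ) ≤ (k : ℝ) := Nat.cast_nonneg k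
      have hkk : ((k + k : ℕ) : ℝ) = (k : ℝ) + (k : ℝ) := by push_cast; ring
      rw [hkk]
      set s : ℝ := (k : ℝ) + (k : ℝ) with hs
      have hs0 : 0 ≤ s := by positivity
      have pa : 0 < (s ^ 3 + 8 * s ^ 2 + 21 * s + 18) * t ^ (k + k + 1) := by positivity
      have pb : 0 < (3 * s ^ 3 + 21 * s ^ 2 + 44 * s + 24) * t ^ (k + k + 2) := by positivity
      have pc : 0 < (3 * s ^ 3 + 18 * s ^ 2 + 31 * s + 16) * t ^ (k + k + 3) := by positivity
      have pd : 0 < (s + 1) * (s + 2) ^ 2 * t ^ (k + k + 4) := by positivity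
      rcases le_or_gt t 1 with h1 | h1
      · linarith
      · have hp : t ≤ t ^ (k + k + 1) := le_self_pow₀ h1.le (Nat.succ_ne_zero _)
        have h4 : (0 : ℝ) ≤ (s ^ 3 + 8 * s ^ 2 + 21 * s + 18 - 18) * t ^ (k + k + 1) := by
          have : (0 : ℝ) ≤ s ^ 3 + 8 * s ^ 2 + 21 * s + 18 - 18 := by nlinarith
          positivity
        nlinarith [pow_pos ht0 (k + k + 1)]
    by_contra h
    push_neg at h
    nlinarith [key, h3]

private lemma evalP (n : ℕ) (x : ℝ) :
    ((∑ i ∈ Finset.range (n + 1), C (((i : ℝ) + 1) ^ 2) * X ^ i : Polynomial ℝ)).eval x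
      = ∑ i ∈ Finset.range (n + 1), ((i : ℝ) + 1) ^ 2 * x ^ i := by
  rw [eval_finset_sum]
  simp

private lemma S_zero (n : ℕ) :
    ∑ i ∈ Finset.range (n + 1), ((i : ℝ) + 1) ^ 2 * (0 : ℝ) ^ i = 1 := by
  rw [Finset.sum_range_succ']
  simp

private lemma deriv_eval (n : ℕ) (x : ℝ) :
    (derivative (∑ i ∈ Finset.range (n + 1), C (((i : ℝ) + 1) ^ 2) * X ^ i : Polynomial ℝ)).eval x
      = ∑ j ∈ Finset.range n, ((j : ℝ) + 2) ^ 2 * ((j : ℝ) + 1) * x ^ j := by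
  rw [derivative_sum]
  rw [eval_finset_sum]
  have : ∀ i ∈ Finset.range (n + 1),
      (derivative (C (((i : ℝ) + 1) ^ 2) * X ^ i)).eval x
        = ((i : ℝ) + 1) ^ 2 * (i : ℝ) * x ^ (i - 1) := by
    intro i _
    rw [derivative_C_mul_X_pow]
    simp
  rw [Finset.sum_congr rfl this, Finset.sum_range_succ']
  simp only [Nat.cast_zero, Nat.add_sub_cancel]
  rw [show ((0:ℝ) + 1) ^ 2 * 0 * x ^ (0 - 1) = 0 by ring, add_zero]
  refine Finset.sum_congr rfl fun j _ => ?_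
  push_cast
  ring

theorem stmt_14 :
    ∀ n : ℕ, Multiset.card
      ((∑ i ∈ Finset.range (n + 1),
        C (((i : ℝ) + 1) ^ 2) * X ^ i : Polynomial ℝ).roots) = n % 2 := by
  intro n
  set p : Polynomial ℝ := ∑ i ∈ Finset.range (n + 1), C (((i : ℝ) + 1) ^ 2) * X ^ i with hpdef
  have hp0 : p ≠ 0 := by
    intro h
    have h1 : p.eval 0 = 1 := by rw [hpdef, evalP, S_zero]
    rw [h] at h1
    simp at h1
  rcases Nat.even_or_odd n with hn | hn
  · rw [Nat.even_iff.mp hn, Multiset.card_eq_zero]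
    refine Multiset.eq_zero_of_forall_notMem fun a ha => ?_
    have h := (mem_roots'.mp ha).2
    rw [IsRoot, hpdef, evalP] at h
    have := S_pos hn a
    linarith
  · rw [Nat.odd_iff.mp hn]
    have hub : Multiset.card p.roots ≤ 1 := by
      have hle := p.card_roots_le_derivative
      have hder : (derivative p).roots = 0 := by
        refine Multiset.eq_zero_of_forall_notMem fun a ha => ?_
        have h := (mem_roots'.mp ha).2
        rw [IsRoot, hpdef, deriv_eval] at h
        obtain ⟨m, rfl⟩ : ∃ m, n = m + 1 := ⟨n - 1, by rcases hn with ⟨k, hk⟩; omega⟩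
        have hm : Even m := by
          rcases hn with ⟨k, hk⟩
          exact ⟨k, by omega⟩
        have := T_pos hm a
        linarith
      rw [hder] at hle
      simpa using hle
    have hlb : 1 ≤ Multiset.card p.roots := by
      have hpos : (0 : ℝ) < p.eval 0 := by
        rw [hpdef, evalP, S_zero]; norm_num
      have hneg : p.eval (-2) < 0 := by
        rw [hpdef, evalP]
        have hid := S_id n (-2)
        obtain ⟨k, rfl⟩ := hn
        have e1 : Even (2 * k + 1 + 1) := ⟨k + 1, by ring⟩
        have o2 : Odd (2 * k + 1 + 2) := ⟨k + 1, by ring⟩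
        have e3 : Even (2 * k + 1 + 3) := ⟨k + 2, by ring⟩
        rw [show ((1 : ℝ) - (-2)) ^ 3 = 27 by norm_num, Even.neg_pow e1, Odd.neg_pow o2,
          Even.neg_pow e3] at hid
        have hk0 : (0 : ℝ) ≤ ((2 * k + 1 : ℕ) : ℝ) := Nat.cast_nonneg _
        have pa : 0 < (((2 * k + 1 : ℕ) : ℝ) + 2) ^ 2 * (2 : ℝ) ^ (2 * k + 1 + 1) := by
          positivity
        have pb : 0 < (2 * ((2 * k + 1 : ℕ) : ℝ) ^ 2 + 6 * ((2 * k + 1 : ℕ) : ℝ) + 3)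
            * (2 : ℝ) ^ (2 * k + 1 + 2) := by positivity
        have pc : 0 < (((2 * k + 1 : ℕ) : ℝ) + 1) ^ 2 * (2 : ℝ) ^ (2 * k + 1 + 3) := by
          positivity
        linarith
      obtain ⟨c, _, hc⟩ := intermediate_value_Icc (by norm_num : (-2 : ℝ) ≤ 0)
        ((p.continuous).continuousOn)
        (Set.mem_Icc.mpr ⟨hneg.le, hpos.le⟩)
      have hcm : c ∈ p.roots := mem_roots'.mpr ⟨hp0, hc⟩
      exact Multiset.card_pos_iff_exists_mem.mpr ⟨c, hcm⟩
    exact le_antisymm hub hlb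
end

section
/- Suppose p(x) = a_0 + a_1 x + ... + a_n x^n is a real polynomial of degree n with constant coefficient a_0 > 0, and suppose the number of real roots of p counted with multiplicity equals n mod 2 (i.e., zero real roots if n is even and exactly one real root if n is odd). Then there exists a real number u > 0 such that the polynomial q(x) = p(x) + u·x^{n+1} has exactly (n+1) mod 2 real roots counted with multiplicity (one real root if n is even and zero real roots if n is odd). -/
open Polynomial

lemma eval_abs_bound (p : Polynomial ℝ) (d : ℕ) (hd : p.natDegree ≤ d) :
    ∃ C > 0, ∀ x : ℝ, |p.eval x| ≤ C * max 1 |x| ^ d := by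
  refine ⟨(∑ i ∈ Finset.range (d + 1), |p.coeff i|) + 1, by positivity, fun x => ?_⟩
  have hM : (1:ℝ) ≤ max 1 |x| := le_max_left _ _
  rw [Polynomial.eval_eq_sum_range' (Nat.lt_succ_of_le hd)]
  calc |∑ i ∈ Finset.range (d+1), p.coeff i * x ^ i|
      ≤ ∑ i ∈ Finset.range (d+1), |p.coeff i * x ^ i| := Finset.abs_sum_le_sum_abs _ _
    _ ≤ ∑ i ∈ Finset.range (d+1), |p.coeff i| * max 1 |x| ^ d := by
        apply Finset.sum_le_sum; intro i hi
        rw [abs_mul, abs_pow]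
        have h1 : |x| ^ i ≤ max 1 |x| ^ i :=
          pow_le_pow_left₀ (abs_nonneg x) (le_max_right _ _) i
        have h2 : max 1 |x| ^ i ≤ max 1 |x| ^ d :=
          pow_le_pow_right₀ hM (Nat.lt_succ_iff.mp (Finset.mem_range.mp hi))
        exact mul_le_mul_of_nonneg_left (h1.trans h2) (abs_nonneg _)
    _ = (∑ i ∈ Finset.range (d+1), |p.coeff i|) * max 1 |x| ^ d := by
        rw [Finset.sum_mul]
    _ ≤ _ := by
        have : (0:ℝ) < max 1 |x| ^ d := by positivity
        nlinarith [this]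

lemma pos_of_no_roots {p : Polynomial ℝ} (hp : ∀ x : ℝ, p.eval x ≠ 0)
    (h0 : 0 < p.eval 0) : ∀ x, 0 < p.eval x := by
  intro x
  by_contra h
  push_neg at h
  have hx : p.eval x < 0 := lt_of_le_of_ne h (hp x)
  have : (0:ℝ) ∈ Set.uIcc (p.eval x) (p.eval 0) :=
    Set.mem_uIcc.2 (Or.inl ⟨hx.le, h0.le⟩)
  obtain ⟨y, _, hy⟩ := intermediate_value_uIcc (p.continuous.continuousOn (s := Set.uIcc x 0)) this
  exact hp y hy

lemma roots_eq_singleton {q : Polynomial ℝ} (hq : q ≠ 0) {x0 : ℝ}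
    (h1 : q.IsRoot x0) (h2 : ∀ x, q.IsRoot x → x = x0)
    (h3 : ¬ q.derivative.IsRoot x0) : q.roots = {x0} := by
  refine Multiset.ext.2 fun a => ?_
  rw [count_roots]
  by_cases ha : a = x0
  · subst ha
    rw [Multiset.count_singleton_self]
    have hpos : 0 < q.rootMultiplicity a := (rootMultiplicity_pos hq).2 h1
    have hlt : ¬ 1 < q.rootMultiplicity a := by
      rw [one_lt_rootMultiplicity_iff_isRoot hq]
      tauto
    omega
  · rw [Multiset.count_singleton, if_neg ha, rootMultiplicity_eq_zero]
    exact fun h => ha (h2 a h)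

set_option maxHeartbeats 1000000 in
theorem stmt_15 (n : ℕ) (p : Polynomial ℝ) (hdeg : p.natDegree = n)
    (h0 : 0 < p.coeff 0)
    (hroots : Multiset.card p.roots = n % 2) :
    ∃ u : ℝ, 0 < u ∧
      Multiset.card (p + C u * X ^ (n + 1)).roots = (n + 1) % 2 := by
  have hp0 : p ≠ 0 := fun h => by simp [h] at h0
  have heval0 : 0 < p.eval 0 := by rwa [← coeff_zero_eq_eval_zero]
  rcases Nat.even_or_odd n with hn | hn
  · -- even case
    have hn0 : n % 2 = 0 := Nat.even_iff.mp hn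
    have hroots0 : p.roots = 0 := Multiset.card_eq_zero.mp (by rw [hroots, hn0])
    have hnoroot : ∀ x : ℝ, p.eval x ≠ 0 := fun x hx => by
      have : x ∈ p.roots := (mem_roots hp0).mpr hx
      rw [hroots0] at this; simp at this
    have hppos := pos_of_no_roots hnoroot heval0
    -- minimum of p on [-1,1]
    obtain ⟨xm, hxm, hmin⟩ := isCompact_Icc.exists_isMinOn
      (⟨0, by norm_num⟩ : (Set.Icc (-1:ℝ) 1).Nonempty) (p.continuous.continuousOn)
    obtain ⟨m, hm⟩ : ∃ m : ℝ, m = p.eval xm := ⟨_, rfl⟩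
    have hmpos : 0 < m := hm ▸ hppos xm
    have hmle : ∀ x : ℝ, |x| ≤ 1 → m ≤ p.eval x := by
      intro x hx
      exact hm ▸ isMinOn_iff.mp hmin x (abs_le.mp hx |>.1 |> fun h => ⟨h, (abs_le.mp hx).2⟩)
    -- bound on derivative
    have hdd : p.derivative.natDegree ≤ n := by
      have h := p.natDegree_derivative_le
      omega
    obtain ⟨Cd, hCd, hCdb⟩ := eval_abs_bound p.derivative n hdd
    obtain ⟨Cp, hCp, hCpb⟩ := eval_abs_bound p n hdeg.le
    obtain ⟨K, hK⟩ : ∃ K : ℝ, K = Cd + 1 := ⟨_, rfl⟩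
    have hKpos : 0 < K := by rw [hK]; linarith
    obtain ⟨δ, hδ⟩ : ∃ δ : ℝ, δ = min 1 (m / (2 * K)) := ⟨_, rfl⟩
    have hδpos : 0 < δ := by rw [hδ]; exact lt_min one_pos (by positivity)
    have hδ1 : δ ≤ 1 := hδ ▸ min_le_left _ _
    have hδm : K * δ ≤ m / 2 := by
      have h1 : δ ≤ m / (2 * K) := hδ ▸ min_le_right _ _
      have h2 : K * δ ≤ K * (m / (2 * K)) := mul_le_mul_of_nonneg_left h1 hKpos.le
      have h3 : K * (m / (2 * K)) = m / 2 := by field_simp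
      linarith
    have hδn : (0:ℝ) < δ ^ n := by positivity
    obtain ⟨u, hu⟩ : ∃ u : ℝ, u = K / δ ^ n := ⟨_, rfl⟩
    have hupos : 0 < u := by rw [hu]; positivity
    have hKu : u * δ ^ n = K := by rw [hu]; field_simp
    have hKle : K ≤ u := by
      have h1 : δ ^ n ≤ 1 := pow_le_one₀ hδpos.le hδ1
      nlinarith
    refine ⟨u, hupos, ?_⟩
    have hev : ∀ x : ℝ, (p + C u * X ^ (n+1)).eval x = p.eval x + u * x ^ (n+1) := by
      intro x; simp
    have hevd : ∀ x : ℝ, (p + C u * X ^ (n+1)).derivative.eval x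
        = p.derivative.eval x + u * ((n+1) * x ^ n) := by
      intro x
      simp [derivative_C_mul, derivative_X_pow]
    -- (a) positivity near 0
    have hA : ∀ x : ℝ, |x| ≤ δ → m / 2 ≤ (p + C u * X ^ (n+1)).eval x := by
      intro x hx
      rw [hev]
      have h1 : m ≤ p.eval x := hmle x (hx.trans hδ1)
      have h2 : |x ^ (n+1)| ≤ δ ^ (n+1) := by
        rw [abs_pow]
        exact pow_le_pow_left₀ (abs_nonneg x) hx _
      have h3 : -(δ ^ (n+1)) ≤ x ^ (n+1) := (abs_le.mp h2).1
      have h4 : u * x ^ (n+1) ≥ -(u * δ ^ (n+1)) := by nlinarith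
      have h5 : u * δ ^ (n+1) = K * δ := by
        rw [pow_succ, ← mul_assoc, hKu]
      linarith
    -- (b) derivative positive away from 0
    have hB : ∀ x : ℝ, δ ≤ |x| → 0 < (p + C u * X ^ (n+1)).derivative.eval x := by
      intro x hx
      rw [hevd]
      have hxn : x ^ n = |x| ^ n := (hn.pow_abs x).symm
      have hb := hCdb x
      have h2 : δ ^ n ≤ |x| ^ n := pow_le_pow_left₀ hδpos.le hx _
      have h3 : (1:ℝ) ≤ n + 1 := by exact_mod_cast Nat.one_le_iff_ne_zero.mpr (Nat.succ_ne_zero n)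
      have hta : (0:ℝ) ≤ |x| ^ n := pow_nonneg (abs_nonneg x) n
      have h5b : u * |x| ^ n ≤ u * ((n+1) * |x| ^ n) :=
        mul_le_mul_of_nonneg_left (le_mul_of_one_le_left hta h3) hupos.le
      rcases le_or_gt |x| 1 with h1 | h1
      · rw [max_eq_left h1] at hb
        have h4 : -Cd ≤ p.derivative.eval x := by
          have := (abs_le.mp (by simpa using hb)).1
          linarith
        have h5a : u * δ ^ n ≤ u * |x| ^ n := mul_le_mul_of_nonneg_left h2 hupos.le
        rw [hxn]
        linarith [hKu, hK]
      · rw [max_eq_right h1.le] at hb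
        have h4 : -(Cd * |x| ^ n) ≤ p.derivative.eval x := (abs_le.mp hb).1
        have h6 : (1:ℝ) ≤ |x| ^ n := one_le_pow₀ h1.le
        have h5a : K * |x| ^ n ≤ u * |x| ^ n := mul_le_mul_of_nonneg_right hKle hta
        have h7 : K * |x| ^ n = Cd * |x| ^ n + |x| ^ n := by rw [hK]; ring
        rw [hxn]
        linarith
    -- (c) positive for x ≥ 0
    have hC : ∀ x : ℝ, 0 ≤ x → 0 < (p + C u * X ^ (n+1)).eval x := by
      intro x hx
      rw [hev]
      have h1 : (0:ℝ) ≤ x ^ (n+1) := pow_nonneg hx _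
      nlinarith [hppos x]
    -- find the root by IVT
    obtain ⟨M, hM⟩ : ∃ M : ℝ, M = max 1 (Cp / u) + 1 := ⟨_, rfl⟩
    have hM1 : 1 < M := by
      rw [hM]
      have := le_max_left (1:ℝ) (Cp / u)
      linarith
    have hMC : Cp < u * M := by
      have h1 : Cp / u ≤ max 1 (Cp / u) := le_max_right _ _
      have h2 : Cp / u < M := by rw [hM]; linarith
      calc Cp = u * (Cp / u) := by field_simp
        _ < u * M := by nlinarith
    have hqM : (p + C u * X ^ (n+1)).eval (-M) < 0 := by
      rw [hev]
      have hodd : Odd (n+1) := Even.add_one hn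
      have h1 : (-M) ^ (n+1) = -(M ^ (n+1)) := hodd.neg_pow M
      have h2 : |p.eval (-M)| ≤ Cp * M ^ n := by
        have := hCpb (-M)
        rwa [abs_neg, abs_of_pos (by linarith : (0:ℝ) < M),
          max_eq_right (by linarith : (1:ℝ) ≤ M)] at this
      have h3 : p.eval (-M) ≤ Cp * M ^ n := (abs_le.mp h2).2
      have h4 : (0:ℝ) < M ^ n := by positivity
      have h5 : Cp * M ^ n < u * M ^ (n+1) := by
        rw [pow_succ]
        nlinarith
      rw [h1]
      linarith
    have hcont := (p + C u * X ^ (n+1)).continuous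
    have hMδ : -M ≤ -δ := by linarith
    have hivt : (0:ℝ) ∈ Set.Icc ((p + C u * X ^ (n+1)).eval (-M))
        ((p + C u * X ^ (n+1)).eval (-δ)) := by
      constructor
      · exact hqM.le
      · have := hA (-δ) (by rw [abs_neg, abs_of_pos hδpos])
        linarith
    obtain ⟨x0, hx0mem, hx0'⟩ := intermediate_value_Icc hMδ hcont.continuousOn hivt
    have hx0 : (p + C u * X ^ (n+1)).eval x0 = 0 := hx0'
    clear hx0'
    -- all roots are ≤ -δ
    have hloc : ∀ x : ℝ, (p + C u * X ^ (n+1)).IsRoot x → x ≤ -δ := by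
      intro x hx
      by_contra h
      push_neg at h
      rcases le_or_gt 0 x with h1 | h1
      · exact (hC x h1).ne' hx
      · have : |x| ≤ δ := by rw [abs_of_neg h1]; linarith
        have := hA x this
        have : (0:ℝ) < (p + C u * X ^ (n+1)).eval x := by linarith
        exact this.ne' hx
    -- strict monotonicity on Iic (-δ)
    have hmono : StrictMonoOn (fun y => (p + C u * X ^ (n+1)).eval y) (Set.Iic (-δ)) := by
      apply strictMonoOn_of_deriv_pos (convex_Iic _) hcont.continuousOn
      intro x hx
      rw [interior_Iic, Set.mem_Iio] at hx
      rw [Polynomial.deriv]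
      apply hB
      rw [abs_of_neg (by linarith : x < 0)]
      linarith
    have huniq : ∀ x : ℝ, (p + C u * X ^ (n+1)).IsRoot x → x = x0 := by
      intro x hx
      have h1 : x ∈ Set.Iic (-δ) := hloc x hx
      have h2 : x0 ∈ Set.Iic (-δ) := hloc x0 hx0
      apply hmono.injOn h1 h2
      show (p + C u * X ^ (n+1)).eval x = (p + C u * X ^ (n+1)).eval x0
      rw [hx]
      exact hx0.symm
    have hqne : (p + C u * X ^ (n+1)) ≠ 0 := by
      intro h
      have := hC 0 le_rfl
      rw [h] at this; simp at this
    have hdne : ¬ (p + C u * X ^ (n+1)).derivative.IsRoot x0 := by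
      have h1 : x0 ≤ -δ := hloc x0 hx0
      have := hB x0 (by rw [abs_of_neg (by linarith : x0 < 0)]; linarith)
      exact fun h => this.ne' h
    rw [roots_eq_singleton hqne hx0 huniq hdne]
    simp [Nat.add_mod, hn0]
  · -- odd case
    have hn1 : n % 2 = 1 := Nat.odd_iff.mp hn
    obtain ⟨r, hr⟩ := Multiset.card_eq_one.mp (by rw [hroots, hn1])
    have hrroot : p.IsRoot r := by
      have : r ∈ p.roots := by rw [hr]; exact Multiset.mem_singleton_self r
      exact (mem_roots hp0).mp this
    obtain ⟨g, hg⟩ := (dvd_iff_isRoot.mpr hrroot)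
    have hgne : g ≠ 0 := by rintro rfl; rw [mul_zero] at hg; exact hp0 hg
    have hrootsg : g.roots = 0 := by
      have hmul := roots_mul (p := X - Polynomial.C r) (q := g) (by rw [← hg]; exact hp0)
      rw [← hg, hr, roots_X_sub_C] at hmul
      exact left_eq_add.mp hmul
    have hgnoroot : ∀ x : ℝ, g.eval x ≠ 0 := by
      intro x hx
      have : x ∈ g.roots := (mem_roots hgne).mpr hx
      rw [hrootsg] at this; simp at this
    have hpx : ∀ x : ℝ, p.eval x = (x - r) * g.eval x := by
      intro x; rw [hg]; simp
    have hr0 : r ≠ 0 := by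
      intro h
      rw [hpx 0, h] at heval0; simp at heval0
    -- key sign fact
    have key : ∀ x : ℝ, p.eval x ≤ 0 → |r| ≤ |x| := by
      intro x hx
      rcases lt_or_gt_of_ne (hgnoroot 0) with hg0 | hg0
      · -- g < 0 everywhere, r > 0
        have hgneg : ∀ y, g.eval y < 0 := by
          have := pos_of_no_roots (p := -g) (by intro y; simpa using hgnoroot y)
            (by simpa using hg0)
          intro y; have := this y; simp at this; linarith
        have hrpos : 0 < r := by
          have := heval0; rw [hpx 0] at this
          nlinarith [hgneg 0]
        have : r ≤ x := by
          rw [hpx x] at hx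
          nlinarith [hgneg x]
        rw [abs_of_pos hrpos, abs_of_pos (lt_of_lt_of_le hrpos this)]; exact this
      · -- g > 0 everywhere, r < 0
        have hgpos := pos_of_no_roots hgnoroot hg0
        have hrneg : r < 0 := by
          have := heval0; rw [hpx 0] at this
          nlinarith [hgpos 0]
        have hxr : x ≤ r := by
          rw [hpx x] at hx
          nlinarith [hgpos x]
        rw [abs_of_neg hrneg, abs_of_neg (lt_of_le_of_lt hxr hrneg)]; linarith
    obtain ⟨Cp, hCp, hCb⟩ := eval_abs_bound p n hdeg.le
    have hR : (0:ℝ) < |r| ^ (n+1) := by positivity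
    obtain ⟨u, hu⟩ : ∃ u : ℝ, u = Cp / |r| ^ (n+1) + Cp + 1 := ⟨_, rfl⟩
    have hupos : 0 < u := by rw [hu]; positivity
    refine ⟨u, hupos, ?_⟩
    have hev : ∀ x : ℝ, (p + C u * X ^ (n+1)).eval x = p.eval x + u * x ^ (n+1) := by
      intro x; simp
    have hne : Even (n+1) := Odd.add_one hn
    have hpos : ∀ x : ℝ, 0 < (p + C u * X ^ (n+1)).eval x := by
      intro x
      rw [hev]
      have hxp : (0:ℝ) ≤ x ^ (n+1) := hne.pow_nonneg x
      rcases lt_or_ge 0 (p.eval x) with h | h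
      · nlinarith
      · have ht : |r| ≤ |x| := key x h
        have habs : |x| ^ (n+1) = x ^ (n+1) := hne.pow_abs x
        have hb := hCb x
        have hmain : Cp * max 1 |x| ^ n < u * x ^ (n+1) := by
          rw [← habs]
          rcases le_or_gt 1 |x| with h1 | h1
          · rw [max_eq_right h1]
            have h2 : |x| ^ n ≤ |x| ^ (n+1) := pow_le_pow_right₀ h1 (Nat.le_succ n)
            have h3 : (0:ℝ) < |x| ^ n := by positivity
            have h4 : Cp + 1 ≤ u := by
              have h5 : 0 ≤ Cp / |r| ^ (n+1) := by positivity
              rw [hu]; linarith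
            calc Cp * |x| ^ n < (Cp + 1) * |x| ^ n := by nlinarith
              _ ≤ (Cp + 1) * |x| ^ (n+1) :=
                  mul_le_mul_of_nonneg_left h2 (by linarith)
              _ ≤ u * |x| ^ (n+1) :=
                  mul_le_mul_of_nonneg_right h4 (by positivity)
          · rw [max_eq_left h1.le]
            have h2 : |r| ^ (n+1) ≤ |x| ^ (n+1) := pow_le_pow_left₀ (abs_nonneg r) ht _
            have h3 : Cp / |r| ^ (n+1) * |r| ^ (n+1) = Cp := div_mul_cancel₀ _ hR.ne'
            have h4 : (0:ℝ) < |x| ^ (n+1) := lt_of_lt_of_le hR h2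
            have h5 : (0:ℝ) ≤ Cp / |r| ^ (n+1) := by positivity
            have h6 : Cp ≤ Cp / |r| ^ (n+1) * |x| ^ (n+1) := by
              calc Cp = Cp / |r| ^ (n+1) * |r| ^ (n+1) := h3.symm
                _ ≤ _ := mul_le_mul_of_nonneg_left h2 h5
            have h7 : 0 < (Cp + 1) * |x| ^ (n+1) := by positivity
            calc Cp * (1:ℝ) ^ n = Cp := by ring
              _ < Cp / |r| ^ (n+1) * |x| ^ (n+1) + (Cp + 1) * |x| ^ (n+1) := by linarith
              _ = u * |x| ^ (n+1) := by rw [hu]; ring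
        have hnegle : -p.eval x ≤ Cp * max 1 |x| ^ n := (neg_le_abs _).trans hb
        linarith
    have hqne : (p + C u * X ^ (n+1)) ≠ 0 := by
      intro h
      have := hpos 0; rw [h] at this; simp at this
    have hempty : (p + C u * X ^ (n+1)).roots = 0 :=
      Multiset.eq_zero_of_forall_notMem fun a ha =>
        (hpos a).ne' ((mem_roots hqne).mp ha)
    rw [hempty]
    simp [Nat.add_mod, hn1]
end

section
/- For every integer n ≥ 1, setting u_n = (1/(2n))·(1 - 1/(2n))^{2n-1}, the inequality Σ_{i=1}^n (2i-1)^{2i-1} · u_n^{2i-1} < 1 holds. -/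
lemma geom_aux (n : ℕ) :
    ∑ i ∈ Finset.Icc 1 n, ((1:ℝ)/2) ^ (2*i-1) = 2/3 * (1 - (1/4)^n) := by
  induction n with
  | zero => simp
  | succ k ih =>
    rw [Finset.sum_Icc_succ_top (by omega), ih]
    have h : 2*(k+1)-1 = 2*k+1 := by omega
    rw [h]
    ring_nf
    have h4 : ((1:ℝ)/2)^(k*2) = (1/4)^k := by rw [mul_comm, pow_mul]; norm_num
    rw [h4]; ring

theorem stmt_17 (n : ℕ) (hn : 1 ≤ n) :
    ∑ i ∈ Finset.Icc 1 n,
      (2 * (i : ℝ) - 1) ^ (2 * i - 1) *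
        ((1 / (2 * (n : ℝ))) * (1 - 1 / (2 * (n : ℝ))) ^ (2 * n - 1)) ^ (2 * i - 1) < 1 := by
  have hn1 : (1:ℝ) ≤ n := by exact_mod_cast hn
  have hmpos : (0:ℝ) < 2*n := by linarith
  have hinvpos : 0 < 1/(2*(n:ℝ)) := by positivity
  have hinv : 1/(2*(n:ℝ)) ≤ 1/2 := by
    rw [div_le_div_iff₀ hmpos (by norm_num)]; linarith
  set b : ℝ := 1 - 1/(2*(n:ℝ)) with hb
  have hb0 : 0 ≤ b := by simp only [hb]; linarith
  have hkey : b ^ (2*n) ≤ 1/2 := by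
    have h1 : b ≤ Real.exp (-(1/(2*(n:ℝ)))) := by
      have := Real.add_one_le_exp (-(1/(2*(n:ℝ)))); simp only [hb]; linarith
    calc b ^ (2*n) ≤ (Real.exp (-(1/(2*(n:ℝ))))) ^ (2*n) :=
          pow_le_pow_left₀ hb0 h1 _
      _ = Real.exp ((2*n) * (-(1/(2*(n:ℝ))))) := by
          rw [← Real.exp_nat_mul]; push_cast; ring_nf
      _ = Real.exp (-1) := by congr 1; field_simp
      _ ≤ 1/2 := by
        rw [Real.exp_neg]
        have h2 : (2:ℝ) ≤ Real.exp 1 := by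
          have := Real.add_one_le_exp (1:ℝ); linarith
        rw [inv_le_comm₀ (by linarith) (by norm_num)]
        linarith
  have hterm : ∀ i ∈ Finset.Icc 1 n,
      (2 * (i : ℝ) - 1) ^ (2 * i - 1) *
        ((1 / (2 * (n : ℝ))) * b ^ (2 * n - 1)) ^ (2 * i - 1) ≤ ((1:ℝ)/2) ^ (2*i-1) := by
    intro i hi
    rw [Finset.mem_Icc] at hi
    obtain ⟨hi1, hi2⟩ := hi
    have hi1' : (1:ℝ) ≤ i := by exact_mod_cast hi1
    have hi2' : (i:ℝ) ≤ n := by exact_mod_cast hi2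
    rw [← mul_pow]
    set c : ℝ := (2 * (i : ℝ) - 1) * ((1 / (2 * (n : ℝ))) * b ^ (2 * n - 1)) with hc
    have hc0 : 0 ≤ c := by
      apply mul_nonneg (by linarith)
      exact mul_nonneg (by positivity) (pow_nonneg hb0 _)
    have hc2 : c ≤ 1/2 := by
      have hbp : 0 ≤ b ^ (2*n-1) := pow_nonneg hb0 _
      have step1 : c ≤ (2 * (n:ℝ) - 1) * ((1 / (2 * (n : ℝ))) * b ^ (2 * n - 1)) := by
        apply mul_le_mul_of_nonneg_right (by linarith)
        exact mul_nonneg (by positivity) hbp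
      have heq : (2 * (n:ℝ) - 1) * ((1 / (2 * (n : ℝ))) * b ^ (2 * n - 1))
          = b * b ^ (2*n-1) := by
        rw [hb]; field_simp
      have heq2 : b * b ^ (2*n-1) = b ^ (2*n) := by
        conv_rhs => rw [show 2*n = (2*n-1)+1 from by omega]
        rw [pow_succ']
      calc c ≤ b * b ^ (2*n-1) := by rw [← heq]; exact step1
        _ = b ^ (2*n) := heq2
        _ ≤ 1/2 := hkey
    exact pow_le_pow_left₀ hc0 hc2 _
  calc ∑ i ∈ Finset.Icc 1 n,
      (2 * (i : ℝ) - 1) ^ (2 * i - 1) *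
        ((1 / (2 * (n : ℝ))) * b ^ (2 * n - 1)) ^ (2 * i - 1)
      ≤ ∑ i ∈ Finset.Icc 1 n, ((1:ℝ)/2) ^ (2*i-1) := Finset.sum_le_sum hterm
    _ = 2/3 * (1 - (1/4)^n) := geom_aux n
    _ ≤ 2/3 := by
        have : (0:ℝ) ≤ (1/4:ℝ)^n := by positivity
        nlinarith
    _ < 1 := by norm_num
end

section
/- For every integer n ≥ 1, setting v_n = (1/(2n+1))·(1 - 1/(2n+1))^{2n+1}, the inequality Σ_{i=1}^n (2i)^{2i+1} · v_n^{2i-1} < 1 holds. -/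
lemma aux_pow : ∀ i : ℕ, 1 ≤ i → 49 * i^3 * 2^i ≤ 32 * 7^i := by
  intro i hi
  induction i with
  | zero => omega
  | succ j ih =>
    rcases Nat.lt_or_ge j 2 with hj | hj
    · interval_cases j <;> norm_num
    · have hj1 : 1 ≤ j := by omega
      have h := ih hj1
      have e1 : 2*j^2 ≤ j*j^2 := Nat.mul_le_mul_right _ hj
      have e2 : 2*j ≤ j*j := Nat.mul_le_mul_right _ hj
      have key : 2 * (j+1)^3 ≤ 7 * j^3 := by nlinarith
      calc 49 * (j+1)^3 * 2^(j+1) = (2 * (j+1)^3) * (49 * 2^j) := by ring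
        _ ≤ (7 * j^3) * (49 * 2^j) := Nat.mul_le_mul_right _ key
        _ = 7 * (49 * j^3 * 2^j) := by ring
        _ ≤ 7 * (32 * 7^j) := Nat.mul_le_mul_left _ h
        _ = 32 * 7^(j+1) := by ring

lemma geo_half : ∀ n : ℕ, ∑ i ∈ Finset.Icc 1 n, (1/2:ℝ)^i ≤ 1 - (1/2)^n := by
  intro n
  induction n with
  | zero => simp
  | succ m ih =>
    rw [Finset.sum_Icc_succ_top (by omega)]
    have h : ((1:ℝ)/2)^(m+1) = (1/2)^m * (1/2) := by ring
    nlinarith [ih]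

set_option maxHeartbeats 1000000 in
lemma big_case (n : ℕ) (hn : 8 ≤ n) :
    ∑ i ∈ Finset.Icc 1 n,
      (2 * (i : ℝ)) ^ (2 * i + 1) *
        ((1 / (2 * (n : ℝ) + 1)) * (1 - 1 / (2 * (n : ℝ) + 1)) ^ (2 * n + 1)) ^ (2 * i - 1)
      < 1 := by
  have he_lt : Real.exp 1 < 2.7182818286 := Real.exp_one_lt_d9
  have he_gt : 2.7182818283 < Real.exp 1 := Real.exp_one_gt_d9
  have hnR : (8:ℝ) ≤ n := by exact_mod_cast hn
  have hm : (0:ℝ) < 2 * (n:ℝ) + 1 := by linarith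
  set w : ℝ := 1 / (2 * (n:ℝ) + 1) with hw
  have hw0 : 0 < w := by positivity
  have hw1 : w ≤ 1 := by rw [hw, div_le_one hm]; linarith
  set v : ℝ := w * (1 - w) ^ (2 * n + 1) with hv
  have hx0 : 0 ≤ 1 - w := by linarith
  have hv0 : 0 ≤ v := by positivity
  have h2nv : 2 * (n:ℝ) * v = (1 - w)^(2*n+2) := by
    have h1 : 2 * (n:ℝ) * w = 1 - w := by
      rw [hw]; field_simp; ring
    calc 2 * (n:ℝ) * v = (2 * (n:ℝ) * w) * (1 - w)^(2*n+1) := by rw [hv]; ring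
      _ = (1 - w) * (1 - w)^(2*n+1) := by rw [h1]
      _ = (1 - w)^(2*n+2) := by ring
  have hexp1 : 1 - w ≤ Real.exp (-w) := by
    have := Real.add_one_le_exp (-w)
    linarith
  have h1w : (1:ℝ) ≤ (2*(n:ℕ)+2) * w := by
    rw [hw, mul_one_div, le_div_iff₀ hm]; push_cast; linarith
  have hkey : 2 * (n:ℝ) * v ≤ Real.exp (-1) := by
    rw [h2nv]
    calc (1 - w)^(2*n+2) ≤ (Real.exp (-w))^(2*n+2) := pow_le_pow_left₀ hx0 hexp1 _
      _ = Real.exp ((2*n+2 : ℕ) * (-w)) := (Real.exp_nat_mul _ _).symm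
      _ ≤ Real.exp (-1) := by
          apply Real.exp_le_exp.mpr
          push_cast
          push_cast at h1w
          nlinarith
  clear_value v w
  have hterm : ∀ i ∈ Finset.Icc 1 n,
      (2 * (i : ℝ)) ^ (2 * i + 1) * v ^ (2 * i - 1)
        ≤ (16 * Real.exp 1 / 49) * (1/2)^i := by
    intro i hi
    rw [Finset.mem_Icc] at hi
    obtain ⟨hi1, hin⟩ := hi
    have hiR : (1:ℝ) ≤ i := by exact_mod_cast hi1
    have hinR : (i:ℝ) ≤ n := by exact_mod_cast hin
    have hnpos : (0:ℝ) < n := by linarith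
    set k : ℕ := 2 * i - 1 with hk
    have hk2 : 2 * i + 1 = k + 2 := by omega
    have hkR : (k:ℝ) = 2 * i - 1 := by
      rw [hk]; push_cast [Nat.cast_sub (by omega : 1 ≤ 2*i)]; ring
    clear_value k
    have hiv : 2 * (i:ℝ) * v ≤ (i / n) * Real.exp (-1) := by
      have hvle : v ≤ Real.exp (-1) / (2 * n) := by
        rw [le_div_iff₀ (by linarith : (0:ℝ) < 2*n)]
        linarith [hkey]
      calc 2 * (i:ℝ) * v ≤ 2 * i * (Real.exp (-1) / (2*n)) := by
            apply mul_le_mul_of_nonneg_left hvle (by linarith)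
        _ = (i / n) * Real.exp (-1) := by field_simp
    have hiv0 : 0 ≤ 2 * (i:ℝ) * v := by positivity
    have hin1 : (i:ℝ)/n ≤ 1 := by rw [div_le_one hnpos]; exact hinR
    have hin0 : 0 ≤ (i:ℝ)/n := by positivity
    have step1 : (2 * (i : ℝ)) ^ (2 * i + 1) * v ^ k = (4 * i^2) * (2 * i * v)^k := by
      rw [hk2, pow_add, mul_pow]; ring
    have step2 : (2 * (i:ℝ) * v)^k ≤ (i/n) * (Real.exp (-1))^k := by
      calc (2 * (i:ℝ) * v)^k ≤ ((i/n) * Real.exp (-1))^k := pow_le_pow_left₀ hiv0 hiv k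
        _ = (i/n)^k * (Real.exp (-1))^k := mul_pow _ _ _
        _ ≤ (i/n) * (Real.exp (-1))^k := by
            apply mul_le_mul_of_nonneg_right _ (by positivity)
            exact pow_le_of_le_one hin0 hin1 (by omega)
    have hexpk : (Real.exp (-1))^k = Real.exp 1 * Real.exp (-2 * i) := by
      rw [← Real.exp_nat_mul, ← Real.exp_add, Real.exp_eq_exp, hkR]; ring
    have h7 : (7:ℝ) ≤ Real.exp 2 := by
      have h2 : Real.exp 2 = Real.exp 1 * Real.exp 1 := by
        rw [← Real.exp_add]; norm_num
      nlinarith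
    have hexp2i : Real.exp (-2 * (i:ℝ)) ≤ (1/7)^i := by
      have h1 : Real.exp (-2 * (i:ℝ)) = (Real.exp (-2))^i := by
        rw [← Real.exp_nat_mul, Real.exp_eq_exp]; ring
      rw [h1]
      apply pow_le_pow_left₀ (Real.exp_nonneg _) _ i
      rw [Real.exp_neg]
      rw [show (1:ℝ)/7 = (7:ℝ)⁻¹ by norm_num]
      exact inv_anti₀ (by norm_num) h7
    have hi37 : (i:ℝ)^3 * (1/7)^i ≤ (32/49) * (1/2)^i := by
      have key : (49:ℝ) * i^3 * 2^i ≤ 32 * 7^i := by exact_mod_cast aux_pow i hi1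
      have h7p : (0:ℝ) < 7^i := by positivity
      have h2p : (0:ℝ) < 2^i := by positivity
      have hdiv : (i:ℝ)^3 / 7^i ≤ (32/49) / 2^i := by
        rw [div_le_div_iff₀ h7p h2p]; nlinarith
      calc (i:ℝ)^3 * (1/7)^i = (i:ℝ)^3 / 7^i := by
            rw [one_div, inv_pow, ← div_eq_mul_inv]
        _ ≤ (32/49) / 2^i := hdiv
        _ = (32/49) * (1/2)^i := by rw [one_div, inv_pow, ← div_eq_mul_inv]
    have hexp0 : (0:ℝ) ≤ (Real.exp (-1))^k := by positivity
    calc (2 * (i : ℝ)) ^ (2 * i + 1) * v ^ k = (4 * i^2) * (2 * i * v)^k := step1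
      _ ≤ (4 * i^2) * ((i/n) * (Real.exp (-1))^k) := by
          apply mul_le_mul_of_nonneg_left step2 (by positivity)
      _ = (4 * i^3 / n) * (Real.exp (-1))^k := by ring
      _ ≤ ((i:ℝ)^3 / 2) * (Real.exp (-1))^k := by
          apply mul_le_mul_of_nonneg_right _ hexp0
          rw [div_le_div_iff₀ hnpos (by norm_num : (0:ℝ) < 2)]
          nlinarith [pow_nonneg (by linarith : (0:ℝ) ≤ (i:ℝ)) 3]
      _ = ((i:ℝ)^3 / 2) * (Real.exp 1 * Real.exp (-2*i)) := by rw [hexpk]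
      _ ≤ ((i:ℝ)^3 / 2) * (Real.exp 1 * (1/7)^i) := by
          apply mul_le_mul_of_nonneg_left _ (by positivity)
          exact mul_le_mul_of_nonneg_left hexp2i (Real.exp_nonneg _)
      _ = (Real.exp 1 / 2) * ((i:ℝ)^3 * (1/7)^i) := by ring
      _ ≤ (Real.exp 1 / 2) * ((32/49) * (1/2)^i) := by
          apply mul_le_mul_of_nonneg_left hi37 (by positivity)
      _ = (16 * Real.exp 1 / 49) * (1/2)^i := by ring
  calc ∑ i ∈ Finset.Icc 1 n, (2 * (i : ℝ)) ^ (2 * i + 1) * v ^ (2 * i - 1)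
      ≤ ∑ i ∈ Finset.Icc 1 n, (16 * Real.exp 1 / 49) * (1/2)^i :=
        Finset.sum_le_sum hterm
    _ = (16 * Real.exp 1 / 49) * ∑ i ∈ Finset.Icc 1 n, (1/2:ℝ)^i := by
        rw [Finset.mul_sum]
    _ ≤ (16 * Real.exp 1 / 49) * 1 := by
        apply mul_le_mul_of_nonneg_left _ (by positivity)
        have := geo_half n
        have : (0:ℝ) < (1/2)^n := by positivity
        linarith [geo_half n]
    _ < 1 := by nlinarith

set_option maxHeartbeats 1000000 in
theorem stmt_18 (n : ℕ) (hn : 1 ≤ n) :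
    ∑ i ∈ Finset.Icc 1 n,
      (2 * (i : ℝ)) ^ (2 * i + 1) *
        ((1 / (2 * (n : ℝ) + 1)) * (1 - 1 / (2 * (n : ℝ) + 1)) ^ (2 * n + 1)) ^ (2 * i - 1)
      < 1 := by
  rcases Nat.lt_or_ge n 8 with h8 | h8
  · interval_cases n <;> norm_num [Finset.sum_Icc_succ_top]
  · exact big_case n h8
end
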